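/- arXiv:2409.01896 — 5 statements merged into one kernel-verified Lean document; each statement's English description precedes it below -/
import Mathlib

section
/- For the matrix A = [[0,1],[-6,1]] with eigenvalues (1 ± i√23)/2, and sampling period T = 2ℓπ/√23 for a positive integer ℓ, the matrix exponential satisfies e^{AT} = (-1)^ℓ e^{T/2} I, where I is the 2×2 identity matrix. -/
open NormedSpace

noncomputable def Jm : Matrix (Fin 2) (Fin 2) ℝ :=
  (2 / Real.sqrt 23) • !![-1/2, 1; -6, 1/2]

lemma Jm_sq : Jm * Jm = -1 := by
  have h23 : Real.sqrt 23 * Real.sqrt 23 = 23 :=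
    Real.mul_self_sqrt (by norm_num)
  have hne : Real.sqrt 23 ≠ 0 := by positivity
  rw [Jm, smul_mul_smul_comm]
  have : (!![-1/2, 1; -6, 1/2] * !![-1/2, 1; -6, 1/2] : Matrix (Fin 2) (Fin 2) ℝ)
      = (-(23/4) : ℝ) • 1 := by
    ext i j; fin_cases i <;> fin_cases j <;>
      simp [Matrix.mul_apply, Fin.sum_univ_succ] <;> norm_num
  rw [this, smul_smul]
  have : 2 / Real.sqrt 23 * (2 / Real.sqrt 23) * -(23 / 4) = -1 := by
    field_simp
    nlinarith [h23]
  rw [this, neg_smul, one_smul]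

/-- For `A = [[0,1],[-6,1]]` and `T = 2ℓπ/√23` with `ℓ ≥ 1`,
`e^{AT} = (-1)^ℓ e^{T/2} I`. -/
theorem stmt_0 (ℓ : ℕ) (hℓ : 1 ≤ ℓ) (T : ℝ)
    (hT : T = 2 * ℓ * Real.pi / Real.sqrt 23) :
    NormedSpace.exp (T • (!![0, 1; -6, 1] : Matrix (Fin 2) (Fin 2) ℝ)) =
      ((-1 : ℝ) ^ ℓ * Real.exp (T / 2)) • (1 : Matrix (Fin 2) (Fin 2) ℝ) := by
  letI : SeminormedRing (Matrix (Fin 2) (Fin 2) ℝ) := Matrix.linftyOpSemiNormedRing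
  letI : NormedRing (Matrix (Fin 2) (Fin 2) ℝ) := Matrix.linftyOpNormedRing
  letI : NormedAlgebra ℝ (Matrix (Fin 2) (Fin 2) ℝ) := Matrix.linftyOpNormedAlgebra
  have hne : Real.sqrt 23 ≠ 0 := by positivity
  set φ : ℂ →ₐ[ℝ] Matrix (Fin 2) (Fin 2) ℝ := Complex.liftAux Jm Jm_sq with hφ
  have hcont : Continuous φ := φ.toLinearMap.continuous_of_finiteDimensional
  have key : φ ((T/2 : ℝ) + (ℓ * Real.pi : ℝ) * Complex.I)
      = T • (!![0, 1; -6, 1] : Matrix (Fin 2) (Fin 2) ℝ) := by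
    rw [hφ, Complex.liftAux_apply]
    simp only [Complex.add_re, Complex.add_im, Complex.ofReal_re, Complex.ofReal_im,
      Complex.mul_re, Complex.mul_im, Complex.I_re, Complex.I_im]
    ring_nf
    rw [Algebra.algebraMap_eq_smul_one, Jm]
    ext i j; fin_cases i <;> fin_cases j <;>
      · simp [hT, Matrix.one_apply]
        field_simp
        all_goals ring
  rw [← key]
  erw [← NormedSpace.map_exp φ hcont]
  have hexpC : NormedSpace.exp ((T/2 : ℝ) + (ℓ * Real.pi : ℝ) * Complex.I)
      = (((-1 : ℝ) ^ ℓ * Real.exp (T / 2) : ℝ) : ℂ) := by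
    rw [← Complex.exp_eq_exp_ℂ,
      Complex.exp_add]
    have : ((ℓ * Real.pi : ℝ) : ℂ) * Complex.I = (ℓ : ℂ) * (Real.pi * Complex.I) := by
      push_cast; ring
    rw [this, Complex.exp_nat_mul, Complex.exp_pi_mul_I, ← Complex.ofReal_exp]
    push_cast
    ring
  rw [hexpC]
  have : φ (((-1 : ℝ) ^ ℓ * Real.exp (T / 2) : ℝ) : ℂ)
      = ((-1 : ℝ) ^ ℓ * Real.exp (T / 2)) • (1 : Matrix (Fin 2) (Fin 2) ℝ) := by
    rw [show (((-1 : ℝ) ^ ℓ * Real.exp (T / 2) : ℝ) : ℂ)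
        = algebraMap ℝ ℂ ((-1 : ℝ) ^ ℓ * Real.exp (T / 2)) from rfl,
      AlgHom.commutes, Algebra.algebraMap_eq_smul_one]
  exact this
end

section
/- For A = [[0,1],[-6,1]], B = [0,1]ᵀ, and any T > 0, the pair (A_{d,T}, [B_{d,T}, B_{i,T}]) is controllable, where A_{d,T} = e^{AT}, B_{d,T} = (∫₀ᵀ e^{Aτ} dτ)B, and B_{i,T} = e^{AT}B. In other words, the MRI sampled-data model for this system has no pathological sampling periods. -/
/-- Entrywise integral `∫₀ᵀ e^{Aτ} dτ`. -/
noncomputable def intExp (A : Matrix (Fin 2) (Fin 2) ℝ) (T : ℝ) :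
    Matrix (Fin 2) (Fin 2) ℝ :=
  Matrix.of fun i j => ∫ τ in (0:ℝ)..T, NormedSpace.exp (τ • A) i j

namespace Stmt2Aux

open Matrix

/-- Each entry of `t ↦ exp(tA)` is differentiable with derivative the entry of `A exp(tA)`. -/
lemma entry_hasDerivAt (A : Matrix (Fin 2) (Fin 2) ℝ) (i j : Fin 2) (t : ℝ) :
    HasDerivAt (fun τ : ℝ => NormedSpace.exp (τ • A) i j)
      ((A * NormedSpace.exp (t • A)) i j) t := by
  letI : SeminormedRing (Matrix (Fin 2) (Fin 2) ℝ) := Matrix.linftyOpSemiNormedRing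
  letI : NormedRing (Matrix (Fin 2) (Fin 2) ℝ) := Matrix.linftyOpNormedRing
  letI : NormedAlgebra ℝ (Matrix (Fin 2) (Fin 2) ℝ) := Matrix.linftyOpNormedAlgebra
  have h : HasDerivAt (fun u : ℝ => NormedSpace.exp (u • A))
      (A * NormedSpace.exp (t • A)) t := hasDerivAt_exp_smul_const' A t
  let L : Matrix (Fin 2) (Fin 2) ℝ →ₗ[ℝ] ℝ :=
    { toFun := fun M => M i j, map_add' := fun _ _ => rfl, map_smul' := fun _ _ => rfl }
  exact L.toContinuousLinearMap.hasFDerivAt.comp_hasDerivAt t h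

lemma entry_continuous (A : Matrix (Fin 2) (Fin 2) ℝ) (i j : Fin 2) :
    Continuous fun τ : ℝ => NormedSpace.exp (τ • A) i j := by
  have : Differentiable ℝ fun τ : ℝ => NormedSpace.exp (τ • A) i j :=
    fun t => (entry_hasDerivAt A i j t).differentiableAt
  exact this.continuous

lemma key_int (A : Matrix (Fin 2) (Fin 2) ℝ) (T : ℝ) :
    A * intExp A T = NormedSpace.exp (T • A) - 1 := by
  ext i j
  have hc : ∀ k l : Fin 2, Continuous fun τ : ℝ => NormedSpace.exp (τ • A) k l :=
    entry_continuous A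
  have hmulc : Continuous fun τ : ℝ => (A * NormedSpace.exp (τ • A)) i j := by
    simp only [Matrix.mul_apply]
    exact continuous_finset_sum _ fun k _ => continuous_const.mul (hc k j)
  have h1 : ∫ τ in (0:ℝ)..T, (A * NormedSpace.exp (τ • A)) i j = (A * intExp A T) i j := by
    calc ∫ τ in (0:ℝ)..T, (A * NormedSpace.exp (τ • A)) i j
        = ∫ τ in (0:ℝ)..T, ∑ k : Fin 2, A i k * NormedSpace.exp (τ • A) k j := by
          simp only [Matrix.mul_apply]
      _ = ∑ k : Fin 2, ∫ τ in (0:ℝ)..T, A i k * NormedSpace.exp (τ • A) k j := by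
          exact intervalIntegral.integral_finset_sum fun k _ =>
            (continuous_const.mul (hc k j)).intervalIntegrable _ _
      _ = ∑ k : Fin 2, A i k * ∫ τ in (0:ℝ)..T, NormedSpace.exp (τ • A) k j := by
          simp only [intervalIntegral.integral_const_mul]
      _ = (A * intExp A T) i j := by
          rw [Matrix.mul_apply]; rfl
  have h2 : ∫ τ in (0:ℝ)..T, (A * NormedSpace.exp (τ • A)) i j
      = NormedSpace.exp (T • A) i j - NormedSpace.exp ((0:ℝ) • A) i j := by
    refine intervalIntegral.integral_eq_sub_of_hasDerivAt
      (fun t _ => entry_hasDerivAt A i j t) (hmulc.intervalIntegrable _ _)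
  rw [← h1, h2, Matrix.sub_apply]
  congr 1
  rw [zero_smul, NormedSpace.exp_zero]

lemma expcol (X : Matrix (Fin 2) (Fin 2) ℝ) :
    ¬(NormedSpace.exp X 0 1 = 0 ∧ NormedSpace.exp X 1 1 = 0) := by
  letI : SeminormedRing (Matrix (Fin 2) (Fin 2) ℝ) := Matrix.linftyOpSemiNormedRing
  letI : NormedRing (Matrix (Fin 2) (Fin 2) ℝ) := Matrix.linftyOpNormedRing
  letI : NormedAlgebra ℝ (Matrix (Fin 2) (Fin 2) ℝ) := Matrix.linftyOpNormedAlgebra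
  rintro ⟨h0, h1⟩
  have hinv : NormedSpace.exp (-X) * NormedSpace.exp X = 1 := by
    rw [← Matrix.exp_add_of_commute _ _ ((Commute.refl X).neg_left), neg_add_cancel,
      NormedSpace.exp_zero]
  have h := congrFun (congrFun hinv 1) 1
  rw [Matrix.mul_apply, Fin.sum_univ_two, h0, h1] at h
  simp [Matrix.one_apply] at h

lemma exp_isUnit (X : Matrix (Fin 2) (Fin 2) ℝ) : IsUnit (NormedSpace.exp X) := by
  letI : SeminormedRing (Matrix (Fin 2) (Fin 2) ℝ) := Matrix.linftyOpSemiNormedRing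
  letI : NormedRing (Matrix (Fin 2) (Fin 2) ℝ) := Matrix.linftyOpNormedRing
  letI : NormedAlgebra ℝ (Matrix (Fin 2) (Fin 2) ℝ) := Matrix.linftyOpNormedAlgebra
  have hinv : NormedSpace.exp X * NormedSpace.exp (-X) = 1 := by
    rw [← Matrix.exp_add_of_commute _ _ ((Commute.refl X).neg_right), add_neg_cancel,
      NormedSpace.exp_zero]
  have hinv2 : NormedSpace.exp (-X) * NormedSpace.exp X = 1 := by
    rw [← Matrix.exp_add_of_commute _ _ ((Commute.refl X).neg_left), neg_add_cancel,
      NormedSpace.exp_zero]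
  exact ⟨⟨_, _, hinv, hinv2⟩, rfl⟩

/-- Lyapunov argument: `exp(TA)` has no fixed vector `(0,1)ᵀ` for `T > 0`. -/
lemma no_fixed (A : Matrix (Fin 2) (Fin 2) ℝ) (hA : A = !![0, 1; -6, 1])
    (T : ℝ) (hT : 0 < T) :
    NormedSpace.exp (T • A) * !![(0:ℝ); 1] ≠ !![(0:ℝ); 1] := by
  intro hfix
  have hA00 : A 0 0 = 0 := by rw [hA]; simp
  have hA01 : A 0 1 = 1 := by rw [hA]; simp
  have hA10 : A 1 0 = -6 := by rw [hA]; simp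
  have hA11 : A 1 1 = 1 := by rw [hA]; simp
  set f : ℝ → ℝ := fun t => NormedSpace.exp (t • A) 0 1 with hf_def
  set g : ℝ → ℝ := fun t => NormedSpace.exp (t • A) 1 1 with hg_def
  have hfd : ∀ t, HasDerivAt f (g t) t := by
    intro t
    have h := entry_hasDerivAt A 0 1 t
    have he : (A * NormedSpace.exp (t • A)) 0 1 = g t := by
      rw [Matrix.mul_apply, Fin.sum_univ_two, hA00, hA01]
      simp [hg_def]
    rwa [he] at h
  have hgd : ∀ t, HasDerivAt g (-6 * f t + g t) t := by
    intro t
    have h := entry_hasDerivAt A 1 1 t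
    have he : (A * NormedSpace.exp (t • A)) 1 1 = -6 * f t + g t := by
      rw [Matrix.mul_apply, Fin.sum_univ_two, hA10, hA11]
      simp [hf_def, hg_def]
    rwa [he] at h
  set V : ℝ → ℝ := fun t => 43 * f t ^ 2 - 2 * (f t * g t) + 7 * g t ^ 2 with hV_def
  have hVd : ∀ t, HasDerivAt V (12 * (f t ^ 2 + g t ^ 2)) t := by
    intro t
    have h := ((((hfd t).pow 2).const_mul (43:ℝ)).sub
        (((hfd t).mul (hgd t)).const_mul (2:ℝ))).add (((hgd t).pow 2).const_mul (7:ℝ))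
    exact h.congr_deriv (by ring)
  have hpos : ∀ t, 0 < 12 * (f t ^ 2 + g t ^ 2) := by
    intro t
    have h := expcol (t • A)
    have h2 : f t ≠ 0 ∨ g t ≠ 0 := by
      rw [hf_def, hg_def]
      tauto
    rcases h2 with h2 | h2
    · have : 0 < f t ^ 2 := by positivity
      nlinarith [sq_nonneg (g t)]
    · have : 0 < g t ^ 2 := by positivity
      nlinarith [sq_nonneg (f t)]
  have hmono : StrictMono V := by
    refine strictMono_of_deriv_pos fun t => ?_
    rw [(hVd t).deriv]
    exact hpos t
  have hf0 : f 0 = 0 := by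
    rw [hf_def]
    simp only [zero_smul, NormedSpace.exp_zero]
    exact Matrix.one_apply_ne (by decide)
  have hg0 : g 0 = 1 := by
    rw [hg_def]
    simp only [zero_smul, NormedSpace.exp_zero]
    exact Matrix.one_apply_eq _
  have hfT : f T = 0 := by
    have h := congrFun (congrFun hfix 0) 0
    rw [Matrix.mul_apply, Fin.sum_univ_two] at h
    simpa using h
  have hgT : g T = 1 := by
    have h := congrFun (congrFun hfix 1) 0
    rw [Matrix.mul_apply, Fin.sum_univ_two] at h
    simpa using h
  have hlt : V 0 < V T := hmono hT
  rw [hV_def] at hlt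
  simp only [hf0, hg0, hfT, hgT] at hlt
  norm_num at hlt

lemma rank_two_of_cols (W : Matrix (Fin 2) ((Fin 1 ⊕ Fin 1) ⊕ (Fin 1 ⊕ Fin 1)) ℝ)
    (j1 j2 : (Fin 1 ⊕ Fin 1) ⊕ (Fin 1 ⊕ Fin 1))
    (h : (!![W 0 j1, W 0 j2; W 1 j1, W 1 j2]).det ≠ 0) : W.rank = 2 := by
  set S := !![W 0 j1, W 0 j2; W 1 j1, W 1 j2] with hS
  have hSU : IsUnit S := (Matrix.isUnit_iff_isUnit_det S).mpr (isUnit_iff_ne_zero.mpr h)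
  set P : Matrix ((Fin 1 ⊕ Fin 1) ⊕ (Fin 1 ⊕ Fin 1)) (Fin 2) ℝ :=
    Matrix.of fun j k => if j = (if k = 0 then j1 else j2) then 1 else 0 with hP
  have hWP : W * P = S := by
    ext i k
    rw [Matrix.mul_apply]
    simp only [hP, Matrix.of_apply, mul_ite, mul_one, mul_zero]
    rw [Finset.sum_ite_eq' Finset.univ]
    simp only [Finset.mem_univ, if_true]
    fin_cases k <;> fin_cases i <;> simp [hS]
  have hr1 : S.rank = 2 := by
    rw [Matrix.rank_of_isUnit S hSU, Fintype.card_fin]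
  refine le_antisymm ?_ ?_
  · simpa using W.rank_le_card_height
  · calc (2:ℕ) = S.rank := hr1.symm
      _ = (W * P).rank := by rw [hWP]
      _ ≤ W.rank := Matrix.rank_mul_le_left W P

lemma det_aux (E : Matrix (Fin 2) (Fin 2) ℝ) (X : Matrix (Fin 2) (Fin 1) ℝ)
    (hdet : IsUnit E.det) (hX : X 0 0 ≠ 0) :
    (!![E 0 1, (E * X) 0 0; E 1 1, (E * X) 1 0]).det ≠ 0 := by
  have hfac : !![E 0 1, (E * X) 0 0; E 1 1, (E * X) 1 0] = E * !![0, X 0 0; 1, X 1 0] := by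
    ext i k
    rw [Matrix.mul_apply, Fin.sum_univ_two]
    fin_cases i <;> fin_cases k <;> simp [Matrix.mul_apply, Fin.sum_univ_two]
  rw [hfac, Matrix.det_mul]
  have h2 : (!![(0:ℝ), X 0 0; 1, X 1 0]).det = -(X 0 0) := by
    rw [Matrix.det_fin_two]; simp
  rw [h2]
  exact mul_ne_zero hdet.ne_zero (neg_ne_zero.mpr hX)

end Stmt2Aux

open Stmt2Aux in
/-- For `A = [[0,1],[-6,1]]`, `B = [0,1]ᵀ` and any `T > 0`, the MRI sampled pair
`(A_{d,T}, [B_{d,T}, B_{i,T}])` is controllable: no pathological sampling periods. -/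
theorem stmt_2 (T : ℝ) (hT : 0 < T)
    (A : Matrix (Fin 2) (Fin 2) ℝ) (hA : A = !![0, 1; -6, 1])
    (B : Matrix (Fin 2) (Fin 1) ℝ) (hB : B = !![0; 1])
    (AdT : Matrix (Fin 2) (Fin 2) ℝ) (hAdT : AdT = NormedSpace.exp (T • A))
    (BdT : Matrix (Fin 2) (Fin 1) ℝ) (hBdT : BdT = intExp A T * B)
    (BiT : Matrix (Fin 2) (Fin 1) ℝ) (hBiT : BiT = NormedSpace.exp (T • A) * B)
    (G : Matrix (Fin 2) (Fin 1 ⊕ Fin 1) ℝ) (hG : G = Matrix.fromCols BdT BiT) :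
    (Matrix.fromCols G (AdT * G)).rank = 2 := by
  subst hG hAdT hBdT hBiT
  set Et := NormedSpace.exp (T • A) with hEt
  set M := intExp A T with hM
  set W := Matrix.fromCols (Matrix.fromCols (M * B) (Et * B))
    (Et * Matrix.fromCols (M * B) (Et * B)) with hW
  have hXB : ∀ (X : Matrix (Fin 2) (Fin 2) ℝ) (i : Fin 2), (X * B) i 0 = X i 1 := by
    intro X i
    rw [hB, Matrix.mul_apply, Fin.sum_univ_two]
    simp
  have hdetE : IsUnit Et.det := (Matrix.isUnit_iff_isUnit_det _).mp (exp_isUnit (T • A))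
  have hAM : A * M = Et - 1 := key_int A T
  have hAMB : A * (M * B) = Et * B - B := by
    rw [← Matrix.mul_assoc, hAM, Matrix.sub_mul, Matrix.one_mul]
  have hA00 : A 0 0 = 0 := by rw [hA]; simp
  have hA01 : A 0 1 = 1 := by rw [hA]; simp
  have hB00 : B 0 0 = 0 := by rw [hB]; simp
  have hMB1 : (M * B) 1 0 = Et 0 1 := by
    have h := congrFun (congrFun hAMB 0) 0
    rw [Matrix.sub_apply, hXB Et 0, Matrix.mul_apply, Fin.sum_univ_two, hA00, hA01, hB00] at h
    simpa using h
  have hfix : ¬(Et * B = B) := by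
    rw [hB]
    exact no_fixed A hA T hT
  have hWe : ∀ i, W i (Sum.inl (Sum.inr 0)) = Et i 1 := by
    intro i
    simp [hW, Matrix.fromCols_apply_inl, Matrix.fromCols_apply_inr, hXB]
  have hWemb : ∀ i, W i (Sum.inr (Sum.inl 0)) = (Et * (M * B)) i 0 := by
    intro i
    simp [hW, Matrix.mul_fromCols, Matrix.fromCols_apply_inl,
      Matrix.fromCols_apply_inr]
  have hWeeb : ∀ i, W i (Sum.inr (Sum.inr 0)) = (Et * (Et * B)) i 0 := by
    intro i
    simp [hW, Matrix.mul_fromCols, Matrix.fromCols_apply_inl,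
      Matrix.fromCols_apply_inr]
  by_cases hc : (M * B) 0 0 = 0
  · -- then `Et 0 1 ≠ 0`: otherwise `M*B = 0` and `Et*B = B`.
    have hEB0 : Et 0 1 ≠ 0 := by
      intro h0
      apply hfix
      have hMBz : M * B = 0 := by
        ext i j
        fin_cases i <;> fin_cases j
        · simpa using hc
        · simpa using hMB1.trans h0
      have h := hAMB
      rw [hMBz, Matrix.mul_zero] at h
      exact (sub_eq_zero.mp h.symm)
    refine rank_two_of_cols W (Sum.inl (Sum.inr 0)) (Sum.inr (Sum.inr 0)) ?_
    have hd := det_aux Et (Et * B) hdetE (by rw [hXB]; exact hEB0)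
    rw [hWe 0, hWe 1, hWeeb 0, hWeeb 1]
    exact hd
  · refine rank_two_of_cols W (Sum.inl (Sum.inr 0)) (Sum.inr (Sum.inl 0)) ?_
    have hd := det_aux Et (M * B) hdetE hc
    rw [hWe 0, hWe 1, hWemb 0, hWemb 1]
    exact hd
end

section
/- For A = [[0,-1],[1,0]], B = [0,1]ᵀ, and T = 2π, the pair (A_{d,T}, [B_{d,T}, B_{i,T}]) is NOT controllable, where A_{d,T} = e^{AT} = I, B_{d,T} = (∫₀ᵀ e^{Aτ}dτ)B = 0, B_{i,T} = e^{AT}B = B. That is, adding an impulsive input does not always remove pathological sampling periods. -/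
open Matrix

/-- The embedding of ℂ into 2×2 real matrices. -/
noncomputable def phiC : ℂ →ₐ[ℝ] Matrix (Fin 2) (Fin 2) ℝ where
  toFun z := !![z.re, -z.im; z.im, z.re]
  map_one' := by ext i j; fin_cases i <;> fin_cases j <;> simp [Matrix.one_apply]
  map_mul' z w := by
    ext i j
    fin_cases i <;> fin_cases j <;>
      simp [Matrix.mul_apply, Fin.sum_univ_two, Complex.mul_re, Complex.mul_im] <;> ring
  map_zero' := by ext i j; fin_cases i <;> fin_cases j <;> simp
  map_add' z w := by ext i j; fin_cases i <;> fin_cases j <;> simp [Matrix.add_apply] <;> ring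
  commutes' r := by
    ext i j
    fin_cases i <;> fin_cases j <;>
      simp [Matrix.algebraMap_eq_diagonal, Matrix.diagonal]

lemma exp_rot (τ : ℝ) :
    NormedSpace.exp (τ • !![(0:ℝ), -1; 1, 0]) =
      !![Real.cos τ, -Real.sin τ; Real.sin τ, Real.cos τ] := by
  letI : SeminormedRing (Matrix (Fin 2) (Fin 2) ℝ) := Matrix.linftyOpSemiNormedRing
  letI : NormedRing (Matrix (Fin 2) (Fin 2) ℝ) := Matrix.linftyOpNormedRing
  letI : NormedAlgebra ℝ (Matrix (Fin 2) (Fin 2) ℝ) := Matrix.linftyOpNormedAlgebra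
  have hcont : Continuous phiC := phiC.toLinearMap.continuous_of_finiteDimensional
  have h1 : τ • !![(0:ℝ), -1; 1, 0] = phiC (τ * Complex.I) := by
    ext i j; fin_cases i <;> fin_cases j <;> simp [phiC]
  have h2 : NormedSpace.exp ((τ : ℂ) * Complex.I) = Complex.exp (τ * Complex.I) := by
    rw [Complex.exp_eq_exp_ℂ]
  rw [h1]
  erw [← NormedSpace.map_exp phiC hcont]
  rw [h2]
  ext i j
  fin_cases i <;> fin_cases j <;>
    simp [phiC, Complex.exp_ofReal_mul_I_re, Complex.exp_ofReal_mul_I_im]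

/-- For `A = [[0,-1],[1,0]]`, `B = [0,1]ᵀ`, `T = 2π`, the MRI sampled pair
`(A_{d,T}, [B_{d,T}, B_{i,T}])` is NOT controllable. -/
theorem stmt_4 (A : Matrix (Fin 2) (Fin 2) ℝ) (hA : A = !![0, -1; 1, 0])
    (B : Matrix (Fin 2) (Fin 1) ℝ) (hB : B = !![0; 1])
    (T : ℝ) (hT : T = 2 * Real.pi)
    (AdT : Matrix (Fin 2) (Fin 2) ℝ) (hAdT : AdT = NormedSpace.exp (T • A))
    (BdT : Matrix (Fin 2) (Fin 1) ℝ) (hBdT : BdT = intExp A T * B)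
    (BiT : Matrix (Fin 2) (Fin 1) ℝ) (hBiT : BiT = NormedSpace.exp (T • A) * B)
    (G : Matrix (Fin 2) (Fin 1 ⊕ Fin 1) ℝ) (hG : G = Matrix.fromCols BdT BiT) :
    (Matrix.fromCols G (AdT * G)).rank < 2 := by
  have hAd : NormedSpace.exp (T • A) = 1 := by
    rw [hA, hT, exp_rot]
    ext i j
    fin_cases i <;> fin_cases j <;>
      simp [Real.cos_two_pi, Real.sin_two_pi, Matrix.one_apply]
  have hint : ∀ i : Fin 2, intExp A T i 1 = 0 := by
    intro i
    fin_cases i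
    · show (∫ τ in (0:ℝ)..T, NormedSpace.exp (τ • A) 0 1) = 0
      have h : ∀ τ : ℝ, NormedSpace.exp (τ • A) 0 1 = -Real.sin τ := by
        intro τ; rw [hA, exp_rot]; simp
      simp only [h]
      rw [intervalIntegral.integral_neg, integral_sin, hT]
      simp [Real.cos_two_pi]
    · show (∫ τ in (0:ℝ)..T, NormedSpace.exp (τ • A) 1 1) = 0
      have h : ∀ τ : ℝ, NormedSpace.exp (τ • A) 1 1 = Real.cos τ := by
        intro τ; rw [hA, exp_rot]; simp
      simp only [h]
      rw [integral_cos, hT]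
      simp [Real.sin_two_pi]
  have hBd : BdT = 0 := by
    rw [hBdT, hB]
    ext i j
    fin_cases j
    rw [Matrix.mul_apply, Fin.sum_univ_two]
    simp [hint i]
  have hBi : BiT = B := by rw [hBiT, hAd, Matrix.one_mul]
  -- Row 0 of the controllability matrix vanishes.
  set M : Matrix (Fin 2) ((Fin 1 ⊕ Fin 1) ⊕ (Fin 1 ⊕ Fin 1)) ℝ :=
    Matrix.fromCols G (AdT * G) with hM
  have row0 : ∀ j, M 0 j = 0 := by
    intro j
    rw [hM, hAdT, hAd, Matrix.one_mul, hG, hBd, hBi, hB]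
    rcases j with (j | j) | (j | j) <;> fin_cases j <;>
      simp [Matrix.fromCols]
  have hMv : ∀ j, Mᵀ j = M 1 j • ![(0:ℝ), 1] := by
    intro j
    funext i
    fin_cases i
    · simpa using row0 j
    · simp
  rw [Matrix.rank_eq_finrank_span_cols]
  have hle : Submodule.span ℝ (Set.range Mᵀ) ≤ Submodule.span ℝ {![(0:ℝ), 1]} := by
    rw [Submodule.span_le]
    rintro _ ⟨j, rfl⟩
    rw [hMv j]
    exact Submodule.smul_mem _ _ (Submodule.mem_span_singleton_self _)
  have h1 : Module.finrank ℝ (Submodule.span ℝ {![(0:ℝ), 1]}) = 1 := by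
    apply finrank_span_singleton
    intro h
    have := congrFun h 1
    simp at this
  calc Module.finrank ℝ (Submodule.span ℝ (Set.range Mᵀ))
      ≤ Module.finrank ℝ (Submodule.span ℝ {![(0:ℝ), 1]}) := Submodule.finrank_mono hle
    _ = 1 := h1
    _ < 2 := one_lt_two
end

section
/- (Adjoint recursion in the preview LQR proof.) Suppose P = Pᵀ solves the identity (A - BR⁻¹Sᵀ)ᵀ P (I + BR⁻¹BᵀP)⁻¹ (A - BR⁻¹Sᵀ) + Q - SR⁻¹Sᵀ = P, with R = Rᵀ > 0 and P > 0. Define G := (I + BR⁻¹BᵀP)⁻¹(A - BR⁻¹Sᵀ). Suppose sequences (x_k), (μ_k), (v_k) satisfy x_{k+1} = A x_k + B v_k, μ_k = Aᵀ μ_{k+1} + Q x_k + S v_k, v_k = -R⁻¹Bᵀ μ_{k+1} - R⁻¹Sᵀ x_k. Then the sequence q_k := P x_k - μ_k satisfies q_k = Gᵀ q_{k+1} for all k. -/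
/-!
Eliminating the input `v` turns the relations into the closed-loop system
`x' = Ā x - K μ'`, `μ = Āᵀ μ' + Q̄ x` with `Ā = A - BR⁻¹Sᵀ`, `K = BR⁻¹Bᵀ`, `Q̄ = Q - SR⁻¹Sᵀ`.
For `M = I + KP`, symmetry of `K` and `P` gives `MᵀP = PM`, hence `M⁻ᵀP = PM⁻¹`. Since
`P x' - μ' = PĀ x - Mᵀ μ'`, applying `Gᵀ = Āᵀ M⁻ᵀ` yields `ĀᵀPM⁻¹Ā x - Āᵀ μ'`, which the
Riccati identity `ĀᵀPM⁻¹Ā + Q̄ = P` turns into `P x - μ`.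
-/

open Matrix
open scoped ComplexOrder

section Riccati

variable {m l α : Type*} [Fintype m] [Fintype l]

theorem transpose_one_add_mul_mul_eq [DecidableEq m] [CommRing α] {K P : Matrix m m α}
    (hK : Kᵀ = K) (hP : Pᵀ = P) : (1 + K * P)ᵀ * P = P * (1 + K * P) := by
  rw [transpose_add, transpose_one, transpose_mul, hK, hP, add_mul, mul_add, Matrix.mul_assoc]
  simp

theorem isUnit_one_add_mul_of_posDef [DecidableEq m] {𝕜 : Type*} [RCLike 𝕜]
    {K P : Matrix m m 𝕜} (hK : K.PosSemidef) (hP : P.PosDef) : IsUnit (1 + K * P) := by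
  have hfactor : 1 + K * P = (P⁻¹ + K) * P := by
    rw [add_mul, nonsing_inv_mul P ((isUnit_iff_isUnit_det P).mp hP.isUnit)]
  rw [hfactor]
  exact (hP.inv.add_posSemidef hK).isUnit.mul hP.isUnit

theorem riccati_adjoint_step [DecidableEq m] [CommRing α] {A K Q P : Matrix m m α}
    (hK : Kᵀ = K) (hP : Pᵀ = P) (hM : IsUnit (1 + K * P))
    (hRic : Aᵀ * P * (1 + K * P)⁻¹ * A + Q = P) {x x' μ μ' : m → α}
    (hx : x' = A *ᵥ x - K *ᵥ μ') (hμ : μ = Aᵀ *ᵥ μ' + Q *ᵥ x) :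
    P *ᵥ x - μ = ((1 + K * P)⁻¹ * A)ᵀ *ᵥ (P *ᵥ x' - μ') := by
  set M := 1 + K * P
  have hMdet : IsUnit M.det := (isUnit_iff_isUnit_det M).mp hM
  have hMt : IsUnit Mᵀ.det := by rwa [det_transpose]
  have hPM : Mᵀ * P = P * M := transpose_one_add_mul_mul_eq hK hP
  have hinv : (M⁻¹)ᵀ * P = P * M⁻¹ := by
    rw [transpose_nonsing_inv]
    calc (Mᵀ)⁻¹ * P = (Mᵀ)⁻¹ * (P * M) * M⁻¹ := by
          rw [Matrix.mul_assoc _ (P * M), Matrix.mul_assoc P, mul_nonsing_inv M hMdet,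
            Matrix.mul_one]
      _ = P * M⁻¹ := by
          rw [← hPM, ← Matrix.mul_assoc, nonsing_inv_mul _ hMt, Matrix.one_mul]
  have hgap : P *ᵥ x' - μ' = (P * A) *ᵥ x - Mᵀ *ᵥ μ' := by
    rw [hx, transpose_add, transpose_one, transpose_mul, hK, hP]
    simp only [mulVec_sub, add_mulVec, one_mulVec, mulVec_mulVec]
    abel
  rw [hgap, transpose_mul, mulVec_sub, mulVec_mulVec, mulVec_mulVec, Matrix.mul_assoc,
    ← Matrix.mul_assoc _ P, hinv, Matrix.mul_assoc _ _ Mᵀ, transpose_nonsing_inv,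
    nonsing_inv_mul _ hMt, Matrix.mul_one]
  conv_lhs => rw [← hRic, hμ]
  simp only [add_mulVec, Matrix.mul_assoc]
  abel

theorem closedLoop_state_eq [CommRing α] [DecidableEq l] {A : Matrix m m α}
    {B S : Matrix m l α} {R : Matrix l l α} {x μ' : m → α} {v : l → α}
    (hv : v = -((R⁻¹ * Bᵀ) *ᵥ μ') - (R⁻¹ * Sᵀ) *ᵥ x) :
    A *ᵥ x + B *ᵥ v = (A - B * R⁻¹ * Sᵀ) *ᵥ x - (B * R⁻¹ * Bᵀ) *ᵥ μ' := by
  subst hv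
  simp only [mulVec_sub, mulVec_neg, sub_mulVec, mulVec_mulVec, Matrix.mul_assoc]
  abel

theorem closedLoop_costate_eq [CommRing α] [DecidableEq l] {A Q : Matrix m m α}
    {B S : Matrix m l α} {R : Matrix l l α} (hR : Rᵀ = R) {x μ' : m → α} {v : l → α}
    (hv : v = -((R⁻¹ * Bᵀ) *ᵥ μ') - (R⁻¹ * Sᵀ) *ᵥ x) :
    Aᵀ *ᵥ μ' + Q *ᵥ x + S *ᵥ v = (A - B * R⁻¹ * Sᵀ)ᵀ *ᵥ μ' + (Q - S * R⁻¹ * Sᵀ) *ᵥ x := by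
  subst hv
  simp only [transpose_sub, transpose_mul, transpose_transpose, transpose_nonsing_inv, hR,
    mulVec_sub, mulVec_neg, sub_mulVec, mulVec_mulVec, Matrix.mul_assoc]
  abel

end Riccati

/-- Adjoint recursion in the preview LQR proof: with `P = Pᵀ ≻ 0` solving the
Riccati identity, `G = (I + BR⁻¹BᵀP)⁻¹(A - BR⁻¹Sᵀ)`, and sequences satisfying the
state/adjoint/input relations, `q_k := Px_k - μ_k` satisfies `q_k = Gᵀ q_{k+1}`. -/
theorem stmt_17 (n p : ℕ) (A Q P : Matrix (Fin n) (Fin n) ℝ)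
    (B S : Matrix (Fin n) (Fin p) ℝ) (R : Matrix (Fin p) (Fin p) ℝ)
    (hR : R.PosDef) (hP : P.PosDef)
    (hRic : (A - B * R⁻¹ * Sᵀ)ᵀ * P * (1 + B * R⁻¹ * Bᵀ * P)⁻¹ * (A - B * R⁻¹ * Sᵀ) +
        Q - S * R⁻¹ * Sᵀ = P)
    (G : Matrix (Fin n) (Fin n) ℝ)
    (hG : G = (1 + B * R⁻¹ * Bᵀ * P)⁻¹ * (A - B * R⁻¹ * Sᵀ))
    (x μ : ℕ → Fin n → ℝ) (v : ℕ → Fin p → ℝ)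
    (hx : ∀ k, x (k + 1) = A.mulVec (x k) + B.mulVec (v k))
    (hμ : ∀ k, μ k = Aᵀ.mulVec (μ (k + 1)) + Q.mulVec (x k) + S.mulVec (v k))
    (hv : ∀ k, v k = -(R⁻¹ * Bᵀ).mulVec (μ (k + 1)) - (R⁻¹ * Sᵀ).mulVec (x k))
    (q : ℕ → Fin n → ℝ) (hq : ∀ k, q k = P.mulVec (x k) - μ k) :
    ∀ k, q k = Gᵀ.mulVec (q (k + 1)) := by
  intro k
  have hK : (B * R⁻¹ * Bᵀ).PosSemidef := by
    simpa using hR.inv.posSemidef.mul_mul_conjTranspose_same B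
  rw [hq, hq, hG]
  exact riccati_adjoint_step hK.isHermitian.eq hP.isHermitian.eq
    (isUnit_one_add_mul_of_posDef hK hP) ((add_sub_assoc _ _ _).symm.trans hRic)
    ((hx k).trans (closedLoop_state_eq (hv k)))
    ((hμ k).trans (closedLoop_costate_eq hR.isHermitian.eq (hv k)))
end

section
/- (Completion of squares telescoping identity.) Under the setup of the adjoint recursion (P solving the Riccati identity, q_k = Px_k - μ_k = Gᵀq_{k+1}, x_{k+1} = Ax_k + Bv_k, v_k = -R⁻¹Bᵀμ_{k+1} - R⁻¹Sᵀx_k), the following holds for each k: x_kᵀ(Q - SR⁻¹Sᵀ)x_k + (v_k + R⁻¹Sᵀx_k)ᵀ R (v_k + R⁻¹Sᵀx_k) = x_kᵀPx_k - x_{k+1}ᵀPx_{k+1} + x_{k+1}ᵀq_{k+1} - x_kᵀq_k. -/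
/-!
Since `q k = P x k - μ k`, all terms in `P` cancel on the right-hand side, which is just
`x k ⬝ μ k - x (k+1) ⬝ μ (k+1)`. The state and costate equations turn this difference into
`xᵀQx + xᵀSv - vᵀBᵀμ₊`, and completing the square in `v` shows the left-hand side equals
`xᵀQx + 2xᵀSv + vᵀRv`, which is the same quantity because the feedback law gives
`Rv = -Bᵀμ₊ - Sᵀx`.
-/

open Matrix

variable {m l K : Type*} [Fintype m] [Fintype l] [CommRing K]

theorem dotProduct_sub_dotProduct_of_state_costate (A Q : Matrix m m K) (B S : Matrix m l K)
    {x x' μ μ' : m → K} {v : l → K} (hx : x' = A *ᵥ x + B *ᵥ v)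
    (hμ : μ = Aᵀ *ᵥ μ' + Q *ᵥ x + S *ᵥ v) :
    x ⬝ᵥ μ - x' ⬝ᵥ μ' = x ⬝ᵥ Q *ᵥ x + x ⬝ᵥ S *ᵥ v - v ⬝ᵥ Bᵀ *ᵥ μ' := by
  subst hx hμ
  simp only [dotProduct_add, add_dotProduct, dotProduct_transpose_mulVec, dotProduct_comm μ']
  ring

variable [DecidableEq l]

theorem dotProduct_mulVec_completeSquare (Q : Matrix m m K) (S : Matrix m l K)
    {R : Matrix l l K} (hR : R.IsSymm) (hdet : IsUnit R.det) (x : m → K) (v : l → K) :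
    x ⬝ᵥ (Q - S * R⁻¹ * Sᵀ) *ᵥ x + (v + (R⁻¹ * Sᵀ) *ᵥ x) ⬝ᵥ R *ᵥ (v + (R⁻¹ * Sᵀ) *ᵥ x) =
      x ⬝ᵥ Q *ᵥ x + 2 * (x ⬝ᵥ S *ᵥ v) + v ⬝ᵥ R *ᵥ v := by
  set y := (R⁻¹ * Sᵀ) *ᵥ x
  have hRy : R *ᵥ y = Sᵀ *ᵥ x := by
    rw [mulVec_mulVec, ← Matrix.mul_assoc, mul_nonsing_inv R hdet, Matrix.one_mul]
  have hvy : v ⬝ᵥ R *ᵥ y = x ⬝ᵥ S *ᵥ v := by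
    rw [hRy, dotProduct_transpose_mulVec]
  have hyv : y ⬝ᵥ R *ᵥ v = x ⬝ᵥ S *ᵥ v := by
    rw [← hR.eq, dotProduct_transpose_mulVec, hvy]
  have hyy : y ⬝ᵥ R *ᵥ y = x ⬝ᵥ (S * R⁻¹ * Sᵀ) *ᵥ x := by
    rw [hRy, dotProduct_transpose_mulVec, Matrix.mul_assoc, ← mulVec_mulVec]
  simp only [sub_mulVec, dotProduct_sub, mulVec_add, dotProduct_add, add_dotProduct,
    hvy, hyv, hyy]
  ring

theorem dotProduct_mulVec_self_of_feedback (B S : Matrix m l K) {R : Matrix l l K}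
    (hdet : IsUnit R.det) {x μ' : m → K} {v : l → K}
    (hv : v = -((R⁻¹ * Bᵀ) *ᵥ μ') - (R⁻¹ * Sᵀ) *ᵥ x) :
    v ⬝ᵥ R *ᵥ v = -(v ⬝ᵥ Bᵀ *ᵥ μ') - x ⬝ᵥ S *ᵥ v := by
  have hRv : R *ᵥ v = -(Bᵀ *ᵥ μ') - Sᵀ *ᵥ x := by
    rw [hv]
    simp only [mulVec_sub, mulVec_neg, mulVec_mulVec, ← Matrix.mul_assoc,
      mul_nonsing_inv R hdet, Matrix.one_mul]
  rw [hRv, dotProduct_sub, dotProduct_neg, dotProduct_transpose_mulVec S]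

theorem stmt_18_general (n p : ℕ) (A Q P : Matrix (Fin n) (Fin n) ℝ)
    (B S : Matrix (Fin n) (Fin p) ℝ) (R : Matrix (Fin p) (Fin p) ℝ)
    (hR : R.PosDef)
    (x μ : ℕ → Fin n → ℝ) (v : ℕ → Fin p → ℝ)
    (hx : ∀ k, x (k + 1) = A.mulVec (x k) + B.mulVec (v k))
    (hμ : ∀ k, μ k = Aᵀ.mulVec (μ (k + 1)) + Q.mulVec (x k) + S.mulVec (v k))
    (hv : ∀ k, v k = -(R⁻¹ * Bᵀ).mulVec (μ (k + 1)) - (R⁻¹ * Sᵀ).mulVec (x k))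
    (q : ℕ → Fin n → ℝ) (hq : ∀ k, q k = P.mulVec (x k) - μ k) :
    ∀ k, x k ⬝ᵥ (Q - S * R⁻¹ * Sᵀ).mulVec (x k) +
        (v k + (R⁻¹ * Sᵀ).mulVec (x k)) ⬝ᵥ
          R.mulVec (v k + (R⁻¹ * Sᵀ).mulVec (x k)) =
      x k ⬝ᵥ P.mulVec (x k) - x (k + 1) ⬝ᵥ P.mulVec (x (k + 1)) +
        x (k + 1) ⬝ᵥ q (k + 1) - x k ⬝ᵥ q k := by
  intro k
  have hdet : IsUnit R.det := hR.det_pos.ne'.isUnit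
  have hRsymm : R.IsSymm := by simpa using hR.isHermitian
  have hstep := dotProduct_sub_dotProduct_of_state_costate A Q B S (hx k) (hμ k)
  have hcost := dotProduct_mulVec_self_of_feedback B S hdet (hv k)
  rw [dotProduct_mulVec_completeSquare Q S hRsymm hdet, hq k, hq (k + 1)]
  simp only [dotProduct_sub]
  linear_combination hcost - hstep

/-- Completion-of-squares telescoping identity in the preview LQR proof. -/
theorem stmt_18 (n p : ℕ) (A Q P : Matrix (Fin n) (Fin n) ℝ)
    (B S : Matrix (Fin n) (Fin p) ℝ) (R : Matrix (Fin p) (Fin p) ℝ)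
    (hR : R.PosDef) (hP : P.PosDef)
    (hRic : (A - B * R⁻¹ * Sᵀ)ᵀ * P * (1 + B * R⁻¹ * Bᵀ * P)⁻¹ * (A - B * R⁻¹ * Sᵀ) +
        Q - S * R⁻¹ * Sᵀ = P)
    (x μ : ℕ → Fin n → ℝ) (v : ℕ → Fin p → ℝ)
    (hx : ∀ k, x (k + 1) = A.mulVec (x k) + B.mulVec (v k))
    (hμ : ∀ k, μ k = Aᵀ.mulVec (μ (k + 1)) + Q.mulVec (x k) + S.mulVec (v k))
    (hv : ∀ k, v k = -(R⁻¹ * Bᵀ).mulVec (μ (k + 1)) - (R⁻¹ * Sᵀ).mulVec (x k))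
    (q : ℕ → Fin n → ℝ) (hq : ∀ k, q k = P.mulVec (x k) - μ k) :
    ∀ k, x k ⬝ᵥ (Q - S * R⁻¹ * Sᵀ).mulVec (x k) +
        (v k + (R⁻¹ * Sᵀ).mulVec (x k)) ⬝ᵥ
          R.mulVec (v k + (R⁻¹ * Sᵀ).mulVec (x k)) =
      x k ⬝ᵥ P.mulVec (x k) - x (k + 1) ⬝ᵥ P.mulVec (x (k + 1)) +
        x (k + 1) ⬝ᵥ q (k + 1) - x k ⬝ᵥ q k :=
  stmt_18_general n p A Q P B S R hR x μ v hx hμ hv q hq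
end
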